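/- arXiv:2012.13403 — 4 statements merged into one kernel-verified Lean document; each statement's English description precedes it below -/
import Mathlib

section
/- Let λ ≠ 0 be a real number and let A be the fuzzy sphere: the associative unital ℂ-algebra generated by x₁, x₂, x₃ subject to the relations x_i x_j − x_j x_i = 2iλ·Σ_k ε_{ijk} x_k (ε the Levi-Civita symbol) and x₁² + x₂² + x₃² = 1 − λ². Let l ≥ 0 be an integer and let f : (Fin l → Fin 3) → ℂ be totally symmetric (invariant under precomposition with every permutation of the l slots) and traceless (for each pair of slots a ≠ b and each choice of the remaining indices, Σ_{c=1}^{3} f evaluated with slots a and b both equal to c vanishes). Set v = Σ_{i : Fin l → Fin 3} f(i)·x_{i(1)}·x_{i(2)}⋯x_{i(l)} ∈ A. Then Σ_{k=1}^{3} [x_k, [x_k, v]] = 4λ²·l(l+1)·v; equivalently, with ∂_k := (2iλ)^{−1}[x_k, −], the element v is an eigenvector of Σ_k ∂_k² with eigenvalue −l(l+1). -/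
noncomputable section

/-- The Levi-Civita symbol on `Fin 3`. -/
def eps (i j k : Fin 3) : ℤ :=
  ((j.val : ℤ) - (i.val : ℤ)) * ((k.val : ℤ) - (i.val : ℤ)) * ((k.val : ℤ) - (j.val : ℤ)) / 2

/-- The defining relations of the fuzzy sphere `ℂ_λ[S²]`:
`x_i x_j - x_j x_i = 2iλ Σ_k ε_{ijk} x_k` and `Σ_i x_i² = 1 - λ²`. -/
inductive FuzzyRel (lam : ℝ) : FreeAlgebra ℂ (Fin 3) → FreeAlgebra ℂ (Fin 3) → Prop
  | comm (i j : Fin 3) :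
      FuzzyRel lam
        (FreeAlgebra.ι ℂ i * FreeAlgebra.ι ℂ j - FreeAlgebra.ι ℂ j * FreeAlgebra.ι ℂ i)
        (∑ k : Fin 3, (2 * (lam : ℂ) * Complex.I * ((eps i j k : ℤ) : ℂ)) • FreeAlgebra.ι ℂ k)
  | radius :
      FuzzyRel lam (∑ i : Fin 3, FreeAlgebra.ι ℂ i * FreeAlgebra.ι ℂ i)
        (algebraMap ℂ (FreeAlgebra ℂ (Fin 3)) (1 - (lam : ℂ) ^ 2))

abbrev FuzzySphere (lam : ℝ) := RingQuot (FuzzyRel lam)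

def fx (lam : ℝ) (i : Fin 3) : FuzzySphere lam :=
  RingQuot.mkAlgHom ℂ (FuzzyRel lam) (FreeAlgebra.ι ℂ i)

/-! Write `v` as the image of its coefficient tensor `f` under
`f ↦ Σ_i f i • x_{i 1} ⋯ x_{i l}`. Since `⁅x_k, -⁆` is a derivation with
`⁅x_k, x_j⁆ = Σ_m c_{kjm} x_m`, it acts on coefficient tensors slot by slot (`adCoeff`), so
`Σ_k ⁅x_k, ⁅x_k, -⁆⁆` becomes a sum over pairs of slots `(a, b)`. By
`Σ_k ε_{kmp} ε_{knq} = δ_{mn} δ_{pq} - δ_{mq} δ_{np}`, a pair `a = b` contributes `8λ²`, and a pair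
`a ≠ b` contributes `4λ²` times the tensor with slots `a, b` swapped minus `4λ²` times its trace
over `a, b`, i.e. `4λ²` by symmetry and tracelessness. Altogether
`l · 8λ² + l (l - 1) · 4λ² = 4λ² l (l + 1)`. -/

open Finset Function

section WordProducts

variable {R A ι : Type*} [CommRing R] [Ring A] [Algebra R A]

lemma Ring.lie_mul (a b c : A) : ⁅a, b * c⁆ = ⁅a, b⁆ * c + b * ⁅a, c⁆ := by
  simp only [Ring.lie_def, mul_sub, sub_mul, mul_assoc]
  abel

variable (x : ι → A)

def wordProd {l : ℕ} (i : Fin l → ι) : A := (List.ofFn fun t => x (i t)).prod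

lemma wordProd_cons {l : ℕ} (p : ι) (i : Fin l → ι) :
    wordProd x (Fin.cons p i : Fin (l + 1) → ι) = x p * wordProd x i := by
  simp [wordProd, List.ofFn_succ]

variable [Fintype ι] {x} {c : ι → ι → ι → R}

lemma lie_wordProd (hc : ∀ k j, ⁅x k, x j⁆ = ∑ m, c k j m • x m) (k : ι) :
    ∀ {l : ℕ} (i : Fin l → ι),
      ⁅x k, wordProd x i⁆ = ∑ a, ∑ m, c k (i a) m • wordProd x (update i a m)
  | 0, i => by simp [wordProd, Ring.lie_def]
  | l + 1, i => by
    induction i using Fin.consCases with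
    | cons p i =>
      simp only [wordProd_cons, Ring.lie_mul, hc, lie_wordProd hc k i, Fin.sum_univ_succ,
        Fin.cons_zero, Fin.cons_succ, Fin.update_cons_zero, ← Fin.cons_update, sum_mul,
        mul_sum, smul_mul_assoc, mul_smul_comm]

lemma Fintype.sum_sum_update {α β M : Type*} [Fintype α] [DecidableEq α] [Fintype β]
    [AddCommMonoid M] (a : α) (g : (α → β) → β → M) :
    ∑ i : α → β, ∑ m, g (update i a m) (i a) = ∑ j : α → β, ∑ m, g j m := by
  have hinv : Involutive fun p : (α → β) × β => (update p.1 a p.2, p.1 a) := fun p => by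
    simp
  simp only [← Fintype.sum_prod_type']
  exact Fintype.sum_equiv hinv.toPerm _ _ fun _ => rfl

def adCoeff (c : ι → ι → ι → R) (k : ι) {l : ℕ} (f : (Fin l → ι) → R) : (Fin l → ι) → R :=
  fun j => ∑ a, ∑ m, c k m (j a) * f (update j a m)

lemma lie_linearCombination_wordProd (hc : ∀ k j, ⁅x k, x j⁆ = ∑ m, c k j m • x m) (k : ι)
    {l : ℕ} (f : (Fin l → ι) → R) :
    ⁅x k, Fintype.linearCombination R (wordProd x) f⁆ =
      Fintype.linearCombination R (wordProd x) (adCoeff c k f) := by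
  simp only [Fintype.linearCombination_apply, Ring.lie_def, mul_sum, sum_mul, mul_smul_comm,
    smul_mul_assoc, ← sum_sub_distrib, ← smul_sub]
  simp only [← Ring.lie_def, lie_wordProd hc, smul_sum, smul_smul, adCoeff, sum_smul]
  rw [sum_comm]
  conv_rhs => rw [sum_comm]
  refine sum_congr rfl fun a _ => ?_
  rw [← Fintype.sum_sum_update a]
  simp [mul_comm]

end WordProducts

section Casimir

variable {R ι : Type*} [CommRing R] [Fintype ι] {c : ι → ι → ι → R} {C : R} {l : ℕ}

lemma sum_adCoeff_adCoeff_apply (f : (Fin l → ι) → R) (j : Fin l → ι) :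
    (∑ k, adCoeff c k (adCoeff c k f)) j =
      ∑ a, ∑ b, ∑ m, ∑ n,
        (∑ k, c k m (j a) * c k n (update j a m b)) * f (update (update j a m) b n) := by
  simp only [Finset.sum_apply, adCoeff, mul_sum, sum_mul, mul_assoc]
  rw [sum_comm]
  refine sum_congr rfl fun a _ => ?_
  conv_rhs => rw [sum_comm]
  rw [sum_comm]
  refine sum_congr rfl fun m _ => ?_
  rw [sum_comm]
  refine sum_congr rfl fun b _ => ?_
  exact sum_comm

variable [DecidableEq ι]

lemma sum_adCoeff_adCoeff_slot_self
    (hcc : ∀ m p n q, ∑ k, c k m p * c k n q =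
      (if m = q ∧ n = p then C else 0) - (if m = n ∧ p = q then C else 0))
    (f : (Fin l → ι) → R) (j : Fin l → ι) (a : Fin l) :
    ∑ m, ∑ n, (∑ k, c k m (j a) * c k n (update j a m a)) * f (update (update j a m) a n) =
      C * (Fintype.card ι - 1) * f j := by
  simp only [update_self, update_idem, hcc]
  simp [sub_mul, sum_sub_distrib, ite_and]
  ring

lemma sum_adCoeff_adCoeff_slot_of_ne
    (hcc : ∀ m p n q, ∑ k, c k m p * c k n q =
      (if m = q ∧ n = p then C else 0) - (if m = n ∧ p = q then C else 0))
    {f : (Fin l → ι) → R}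
    (hsym : ∀ (σ : Equiv.Perm (Fin l)) (i : Fin l → ι), f (i ∘ σ) = f i)
    (htrace : ∀ a b : Fin l, a ≠ b → ∀ i : Fin l → ι,
      ∑ m : ι, f (update (update i a m) b m) = 0)
    (j : Fin l → ι) {a b : Fin l} (hab : a ≠ b) :
    ∑ m, ∑ n, (∑ k, c k m (j a) * c k n (update j a m b)) * f (update (update j a m) b n) =
      C * f j := by
  simp only [update_of_ne hab.symm, hcc, sub_mul, sum_sub_distrib, ite_mul, zero_mul,
    ite_and]
  have hswap : f (update (update j a (j b)) b (j a)) = f j := by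
    rw [← Equiv.comp_swap_eq_update, hsym]
  simp [sum_ite_eq', hswap, ← mul_sum, htrace a b hab]

theorem sum_adCoeff_adCoeff
    (hcc : ∀ m p n q, ∑ k, c k m p * c k n q =
      (if m = q ∧ n = p then C else 0) - (if m = n ∧ p = q then C else 0))
    {f : (Fin l → ι) → R}
    (hsym : ∀ (σ : Equiv.Perm (Fin l)) (i : Fin l → ι), f (i ∘ σ) = f i)
    (htrace : ∀ a b : Fin l, a ≠ b → ∀ i : Fin l → ι,
      ∑ m : ι, f (update (update i a m) b m) = 0) :
    ∑ k, adCoeff c k (adCoeff c k f) = (C * l * (l + Fintype.card ι - 2)) • f := by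
  funext j
  have hrow : ∀ a, ∑ b, ∑ m, ∑ n, (∑ k, c k m (j a) * c k n (update j a m b)) *
      f (update (update j a m) b n) = C * (l + Fintype.card ι - 2) * f j := by
    intro a
    rw [← add_sum_erase _ _ (mem_univ a), sum_adCoeff_adCoeff_slot_self hcc,
      sum_congr rfl fun b hb =>
        sum_adCoeff_adCoeff_slot_of_ne hcc hsym htrace j (ne_of_mem_erase hb).symm]
    simp only [sum_const, card_erase_of_mem (mem_univ a), card_univ, Fintype.card_fin,
      nsmul_eq_mul, Nat.cast_pred (Fin.pos a)]
    ring
  simp only [sum_adCoeff_adCoeff_apply, hrow, sum_const, card_univ, Fintype.card_fin,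
    nsmul_eq_mul, Pi.smul_apply, smul_eq_mul]
  ring

end Casimir

lemma sum_eps_mul_eps : ∀ m p n q : Fin 3, ∑ k, eps k m p * eps k n q =
    (if m = n ∧ p = q then 1 else 0) - (if m = q ∧ n = p then 1 else 0) := by
  decide

section FuzzySphere

open Complex

variable (lam : ℝ)

def fuzzyStructConst (i j k : Fin 3) : ℂ := 2 * lam * I * eps i j k

lemma fx_lie_fx (i j : Fin 3) :
    ⁅fx lam i, fx lam j⁆ = ∑ k, fuzzyStructConst lam i j k • fx lam k := by
  have h := RingQuot.mkAlgHom_rel ℂ (FuzzyRel.comm (lam := lam) i j)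
  simp only [map_sub, map_mul, map_sum, map_smul] at h
  simpa [fx, fuzzyStructConst, Ring.lie_def] using h

lemma sum_fuzzyStructConst_mul (m p n q : Fin 3) :
    ∑ k, fuzzyStructConst lam k m p * fuzzyStructConst lam k n q =
      (if m = q ∧ n = p then 4 * (lam : ℂ) ^ 2 else 0) -
        (if m = n ∧ p = q then 4 * (lam : ℂ) ^ 2 else 0) := by
  have hI : ∀ k, fuzzyStructConst lam k m p * fuzzyStructConst lam k n q =
      -4 * (lam : ℂ) ^ 2 * ((eps k m p * eps k n q : ℤ) : ℂ) := fun k => by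
    push_cast [fuzzyStructConst]
    linear_combination (4 * (lam : ℂ) ^ 2 * eps k m p * eps k n q) * I_sq
  rw [sum_congr rfl fun k _ => hI k, ← mul_sum, ← Int.cast_sum, sum_eps_mul_eps]
  push_cast
  split_ifs <;> ring

end FuzzySphere

theorem stmt1_general (lam : ℝ) (l : ℕ)
    (f : (Fin l → Fin 3) → ℂ)
    (hsym : ∀ (σ : Equiv.Perm (Fin l)) (i : Fin l → Fin 3), f (i ∘ σ) = f i)
    (htrace : ∀ a b : Fin l, a ≠ b → ∀ i : Fin l → Fin 3,
      ∑ c : Fin 3, f (Function.update (Function.update i a c) b c) = 0)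
    (v : FuzzySphere lam)
    (hv : v = ∑ i : Fin l → Fin 3, f i • (List.ofFn fun k : Fin l => fx lam (i k)).prod) :
    ∑ k : Fin 3,
        (fx lam k * (fx lam k * v - v * fx lam k) - (fx lam k * v - v * fx lam k) * fx lam k)
      = ((4 * lam ^ 2 * (l * (l + 1)) : ℝ) : ℂ) • v := by
  have hv' : v = Fintype.linearCombination ℂ (wordProd (fx lam)) f := hv
  simp only [← Ring.lie_def, hv', lie_linearCombination_wordProd (fx_lie_fx lam), ← map_sum,
    sum_adCoeff_adCoeff (sum_fuzzyStructConst_mul lam) hsym htrace, map_smul]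
  congr 1
  push_cast [Fintype.card_fin]
  ring

/-- For `f` totally symmetric and traceless and
`v = Σ_i f(i) x_{i(1)} ⋯ x_{i(l)}`, we have `Σ_k [x_k,[x_k,v]] = 4λ² l(l+1) v`,
i.e. `v` is an eigenvector of `Σ_k ∂_k²` (where `∂_k = (2iλ)⁻¹ [x_k, -]`) with
eigenvalue `-l(l+1)`. -/
theorem stmt1 (lam : ℝ) (hlam : lam ≠ 0) (l : ℕ)
    (f : (Fin l → Fin 3) → ℂ)
    (hsym : ∀ (σ : Equiv.Perm (Fin l)) (i : Fin l → Fin 3), f (i ∘ σ) = f i)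
    (htrace : ∀ a b : Fin l, a ≠ b → ∀ i : Fin l → Fin 3,
      ∑ c : Fin 3, f (Function.update (Function.update i a c) b c) = 0)
    (v : FuzzySphere lam)
    (hv : v = ∑ i : Fin l → Fin 3, f i • (List.ofFn fun k : Fin l => fx lam (i k)).prod) :
    ∑ k : Fin 3,
        (fx lam k * (fx lam k * v - v * fx lam k) - (fx lam k * v - v * fx lam k) * fx lam k)
      = ((4 * lam ^ 2 * (l * (l + 1)) : ℝ) : ℂ) • v :=
  stmt1_general lam l f hsym htrace v hv
end
end

section
/- Fix k > 0 and let β : (0, ∞) → ℝ be twice differentiable and nowhere zero, and set H = 1/β. Then the Ricci-flatness equations of the fuzzy black hole metric, which under H = 1/β reduce to the two conditions β''(r) + (3/r)β'(r) = 0 and k·(2rβ'(r) + 4β(r) − 2 + 3k) − 2 = 0 for all r > 0, hold if and only if there exists a constant c₁ ∈ ℝ such that β(r) = (1/2)(1/k + 1) − (3/4)k + c₁/r² for all r > 0. -/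
/-- For the fuzzy black hole metric with `H = 1/β`, the Ricci-flatness
equations `β'' + (3/r)β' = 0` and `k(2rβ' + 4β - 2 + 3k) - 2 = 0` on `(0,∞)` hold iff
`β(r) = (1/2)(1/k + 1) - (3/4)k + c₁/r²` for some constant `c₁`. -/
theorem stmt6 (k : ℝ) (hk : 0 < k)
    (β β' β'' H : ℝ → ℝ)
    (hβ0 : ∀ r, 0 < r → β r ≠ 0)
    (hH : ∀ r, 0 < r → H r = 1 / β r)
    (hd1 : ∀ r, 0 < r → HasDerivAt β (β' r) r)
    (hd2 : ∀ r, 0 < r → HasDerivAt β' (β'' r) r) :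
    (∀ r, 0 < r → β'' r + (3 / r) * β' r = 0 ∧
        k * (2 * r * β' r + 4 * β r - 2 + 3 * k) - 2 = 0)
      ↔ ∃ c₁ : ℝ, ∀ r, 0 < r →
        β r = (1 / 2) * (1 / k + 1) - (3 / 4) * k + c₁ / r ^ 2 := by
  have hk0 : k ≠ 0 := hk.ne'
  set A : ℝ := 2 / k + 2 - 3 * k with hA
  constructor
  · intro h
    have hAeq : ∀ r, 0 < r → 2 * r * β' r + 4 * β r = A := by
      intro r hr
      have h2 := (h r hr).2
      have h3 : 2 / k = 2 * r * β' r + 4 * β r - 2 + 3 * k := by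
        rw [div_eq_iff hk0]; linear_combination -h2
      rw [hA]; linarith
    set f : ℝ → ℝ := fun r => r ^ 2 * (β r - A / 4) with hf
    have hderiv : ∀ x ∈ Set.Ioi (0:ℝ), HasDerivWithinAt f ((fun _ => (0:ℝ)) x) (Set.Ioi 0) x := by
      intro r hr
      have hr' : (0:ℝ) < r := hr
      have h1 : HasDerivAt (fun s : ℝ => s ^ 2) (2 * r) r := by
        simpa using (hasDerivAt_pow 2 r)
      have h2 : HasDerivAt (fun s => β s - A / 4) (β' r) r := (hd1 r hr').sub_const _
      have h3 := h1.mul h2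
      have h4 : 2 * r * (β r - A / 4) + r ^ 2 * β' r = 0 := by
        linear_combination (hAeq r hr') * (r / 2)
      have h5 : HasDerivAt f 0 r := by
        rw [h4] at h3; exact h3
      exact h5.hasDerivWithinAt
    have hconst : ∀ r, 0 < r → f r = f 1 := by
      intro r hr
      have := Convex.norm_image_sub_le_of_norm_hasDerivWithin_le
        (C := 0) hderiv (fun x _ => by simp) (convex_Ioi 0) (Set.mem_Ioi.2 one_pos)
        (Set.mem_Ioi.2 hr)
      have h0 : f r - f 1 = 0 := norm_le_zero_iff.mp (by simpa using this)
      linarith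
    refine ⟨f 1, fun r hr => ?_⟩
    have hfr := hconst r hr
    have hr0 : r ≠ 0 := hr.ne'
    have : β r = f 1 / r ^ 2 + A / 4 := by
      have hfr' : r ^ 2 * (β r - A / 4) = f 1 := hfr
      rw [← hfr', mul_div_cancel_left₀ _ (pow_ne_zero 2 hr0)]; ring
    rw [this, hA]
    field_simp
    ring
  · rintro ⟨c₁, hc⟩ r hr
    have hr0 : r ≠ 0 := hr.ne'
    -- the explicit function and its derivatives
    have hβ'val : ∀ s, 0 < s → β' s = -2 * c₁ / s ^ 3 := by
      intro s hs
      have hs0 : s ≠ 0 := hs.ne'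
      have hg : HasDerivAt (fun x : ℝ => (1 / 2) * (1 / k + 1) - (3 / 4) * k + c₁ / x ^ 2)
          (-2 * c₁ / s ^ 3) s := by
        have h1 : HasDerivAt (fun x : ℝ => x ^ 2) (2 * s) s := by
          simpa using (hasDerivAt_pow 2 s)
        have h2 : HasDerivAt (fun x : ℝ => (x ^ 2)⁻¹) (-(2 * s) / (s ^ 2) ^ 2) s :=
          h1.inv (pow_ne_zero 2 hs0)
        have h3 := (h2.const_mul c₁).const_add ((1 / 2) * (1 / k + 1) - (3 / 4) * k)
        have hval : c₁ * (-(2 * s) / (s ^ 2) ^ 2) = -2 * c₁ / s ^ 3 := by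
          field_simp
        rw [← hval]
        simpa [div_eq_mul_inv] using h3
      have hgβ : HasDerivAt β (-2 * c₁ / s ^ 3) s := by
        apply hg.congr_of_eventuallyEq
        filter_upwards [Ioi_mem_nhds hs] with x hx
        exact hc x hx
      exact (hd1 s hs).unique hgβ
    have hβ''val : β'' r = 6 * c₁ / r ^ 4 := by
      have hg : HasDerivAt (fun x : ℝ => -2 * c₁ / x ^ 3) (6 * c₁ / r ^ 4) r := by
        have h1 : HasDerivAt (fun x : ℝ => x ^ 3) (3 * r ^ 2) r := by
          simpa using (hasDerivAt_pow 3 r)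
        have h2 : HasDerivAt (fun x : ℝ => (x ^ 3)⁻¹) (-(3 * r ^ 2) / (r ^ 3) ^ 2) r :=
          h1.inv (pow_ne_zero 3 hr0)
        have h3 := h2.const_mul (-2 * c₁)
        have hval : -2 * c₁ * (-(3 * r ^ 2) / (r ^ 3) ^ 2) = 6 * c₁ / r ^ 4 := by
          field_simp
          ring
        rw [← hval]
        simpa [div_eq_mul_inv] using h3
      have hgβ' : HasDerivAt β' (6 * c₁ / r ^ 4) r := by
        apply hg.congr_of_eventuallyEq
        filter_upwards [Ioi_mem_nhds hr] with x hx
        exact hβ'val x hx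
      exact (hd2 r hr).unique hgβ'
    constructor
    · rw [hβ''val, hβ'val r hr]
      field_simp
      ring
    · rw [hβ'val r hr, hc r hr]
      field_simp
      ring
end

section
/- Let r_H > 0 and m ∈ ℝ, and let α ∈ ℂ satisfy 4α(α − 1) + m²r_H² = 0 (i.e. α = (1 ± √(1 − m²r_H²))/2). Then the function φ : (r_H, ∞) → ℂ defined by φ(r) = (r² − r_H²)^α / r² satisfies the ordinary differential equation φ''(r) + (3/r)·φ'(r) + (m² r_H² r² / (r² − r_H²)²)·φ(r) = 0 for all r > r_H. -/
lemma aux_hd (r_H : ℝ) (hrH : 0 < r_H) (β : ℂ) (n : ℕ) (r : ℝ) (hr : r_H < r) :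
    HasDerivAt (fun s : ℝ => ((s:ℂ)^2 - (r_H:ℂ)^2)^β / (s:ℂ)^n)
      ((β * ((r:ℂ)^2 - (r_H:ℂ)^2)^(β-1) * (2*(r:ℂ)) * (r:ℂ)^n
        - ((r:ℂ)^2 - (r_H:ℂ)^2)^β * ((n:ℂ) * (r:ℂ)^(n-1))) / ((r:ℂ)^n)^2) r := by
  have hr0 : (0:ℝ) < r := hrH.trans hr
  have hc : (r:ℂ) ≠ 0 := by exact_mod_cast hr0.ne'
  have hslit : ((r:ℂ)^2 - (r_H:ℂ)^2) ∈ Complex.slitPlane := by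
    left
    have : ((r:ℂ)^2 - (r_H:ℂ)^2) = ((r^2 - r_H^2 : ℝ) : ℂ) := by push_cast; ring
    rw [this, Complex.ofReal_re]
    nlinarith
  have hu : HasDerivAt (fun z : ℂ => z^2 - (r_H:ℂ)^2) (2*(r:ℂ)) (r:ℂ) := by
    simpa using (hasDerivAt_pow 2 (r:ℂ)).sub_const ((r_H:ℂ)^2)
  have hnum : HasDerivAt (fun z : ℂ => (z^2 - (r_H:ℂ)^2)^β)
      (β * ((r:ℂ)^2 - (r_H:ℂ)^2)^(β-1) * (2*(r:ℂ))) (r:ℂ) :=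
    hu.cpow_const hslit
  have hden : HasDerivAt (fun z : ℂ => z^n) ((n:ℂ) * (r:ℂ)^(n-1)) (r:ℂ) :=
    hasDerivAt_pow n (r:ℂ)
  exact (hnum.div hden (pow_ne_zero n hc)).comp_ofReal


/-- Let `r_H > 0`, `m ∈ ℝ`, and `α ∈ ℂ` with `4α(α-1) + m²r_H² = 0`.
Then `φ(r) = (r² - r_H²)^α / r²` on `(r_H, ∞)` satisfies
`φ'' + (3/r)φ' + (m²r_H²r²/(r² - r_H²)²)φ = 0` for all `r > r_H`. -/
theorem stmt11 (r_H : ℝ) (hrH : 0 < r_H) (m : ℝ) (α : ℂ)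
    (hα : 4 * α * (α - 1) + (m : ℂ) ^ 2 * (r_H : ℂ) ^ 2 = 0)
    (φ : ℝ → ℂ)
    (hφ : ∀ r : ℝ, r_H < r → φ r = ((r : ℂ) ^ 2 - (r_H : ℂ) ^ 2) ^ α / (r : ℂ) ^ 2) :
    ∀ r : ℝ, r_H < r →
      deriv (deriv φ) r + (3 / (r : ℂ)) * deriv φ r
        + ((m : ℂ) ^ 2 * (r_H : ℂ) ^ 2 * (r : ℂ) ^ 2 / ((r : ℂ) ^ 2 - (r_H : ℂ) ^ 2) ^ 2) * φ r
        = 0 := by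
  set E : ℝ → ℂ := fun s =>
    2 * α * (((s:ℂ)^2 - (r_H:ℂ)^2)^(α-1) / (s:ℂ)^1)
      - 2 * (((s:ℂ)^2 - (r_H:ℂ)^2)^α / (s:ℂ)^3) with hE
  have key : ∀ s : ℝ, r_H < s → deriv φ s = E s := by
    intro s hs
    have hs0 : (0:ℝ) < s := hrH.trans hs
    have hc : (s:ℂ) ≠ 0 := by exact_mod_cast hs0.ne'
    have hfe : φ =ᶠ[nhds s] fun t : ℝ => ((t:ℂ)^2 - (r_H:ℂ)^2)^α / (t:ℂ)^2 := by
      filter_upwards [Ioi_mem_nhds hs] with t ht using hφ t ht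
    rw [hfe.deriv_eq, (aux_hd r_H hrH α 2 s hs).deriv, hE]
    field_simp
    ring
  intro r hr
  have hr0 : (0:ℝ) < r := hrH.trans hr
  have hc : (r:ℂ) ≠ 0 := by exact_mod_cast hr0.ne'
  have hu0 : ((r:ℂ)^2 - (r_H:ℂ)^2) ≠ 0 := by
    have h : ((r:ℂ)^2 - (r_H:ℂ)^2) = ((r^2 - r_H^2 : ℝ) : ℂ) := by push_cast; ring
    rw [h]
    exact_mod_cast (by nlinarith : (r:ℝ)^2 - r_H^2 ≠ 0)
  have hde : deriv φ =ᶠ[nhds r] E := by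
    filter_upwards [Ioi_mem_nhds hr] with t ht using key t ht
  have hEd : HasDerivAt E
      (2 * α * ((((α-1) * ((r:ℂ)^2 - (r_H:ℂ)^2)^(α-1-1) * (2*(r:ℂ)) * (r:ℂ)^1
        - ((r:ℂ)^2 - (r_H:ℂ)^2)^(α-1) * ((1:ℕ) * (r:ℂ)^(1-1))) / ((r:ℂ)^1)^2))
      - 2 * (((α * ((r:ℂ)^2 - (r_H:ℂ)^2)^(α-1) * (2*(r:ℂ)) * (r:ℂ)^3
        - ((r:ℂ)^2 - (r_H:ℂ)^2)^α * ((3:ℕ) * (r:ℂ)^(3-1))) / ((r:ℂ)^3)^2))) r :=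
    ((aux_hd r_H hrH (α-1) 1 r hr).const_mul (2*α)).sub
      ((aux_hd r_H hrH α 3 r hr).const_mul 2)
  rw [hde.deriv_eq, hEd.deriv, key r hr, hφ r hr]
  simp only [hE]
  set u : ℂ := (r:ℂ)^2 - (r_H:ℂ)^2 with hu
  set A : ℂ := u ^ (α - 2) with hA
  have hA1 : u ^ (α - 1) = A * u := by
    rw [hA, show α - 1 = (α - 2) + 1 by ring, Complex.cpow_add _ _ hu0, Complex.cpow_one]
  have hA2 : u ^ α = A * u ^ 2 := by
    rw [hA, show α = (α - 2) + 2 by ring, Complex.cpow_add _ _ hu0,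
      show ((2:ℂ)) = ((2:ℕ):ℂ) by norm_num, Complex.cpow_natCast]
    ring_nf
  have hA3 : u ^ (α - 1 - 1) = A := by
    rw [hA, show α - 1 - 1 = α - 2 by ring]
  rw [hA1, hA2, hA3]
  have : (2 * α * (((α-1) * A * (2*(r:ℂ)) * (r:ℂ)^1
        - A * u * ((1:ℕ) * (r:ℂ)^(1-1))) / ((r:ℂ)^1)^2)
      - 2 * ((α * (A * u) * (2*(r:ℂ)) * (r:ℂ)^3
        - A * u^2 * ((3:ℕ) * (r:ℂ)^(3-1))) / ((r:ℂ)^3)^2))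
      + (3 / (r:ℂ)) * (2 * α * (A * u / (r:ℂ)^1) - 2 * (A * u^2 / (r:ℂ)^3))
      + ((m:ℂ)^2 * (r_H:ℂ)^2 * (r:ℂ)^2 / u^2) * (A * u^2 / (r:ℂ)^2)
      = (4 * α * (α - 1) + (m:ℂ)^2 * (r_H:ℂ)^2) * A := by
    have hu2 : u = (r:ℂ)^2 - (r_H:ℂ)^2 := hu
    field_simp
    have hden : ((r:ℂ))^2 * (((r:ℂ))^3)^2 * ((r:ℂ) * ((r:ℂ) * ((r:ℂ))^3)) ≠ 0 :=
      mul_ne_zero (mul_ne_zero (pow_ne_zero 2 hc) (pow_ne_zero 2 (pow_ne_zero 3 hc)))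
        (mul_ne_zero hc (mul_ne_zero hc (pow_ne_zero 3 hc)))
    norm_num only [Nat.cast_one, Nat.cast_ofNat]
    ring
  rw [this, hα, zero_mul]
end

section
/- Let n ≥ 1 be an integer, q = exp(2πi/n), r_H > 0, ω, m ∈ ℝ, l ∈ ℤ, and λ_l = −4 sin²(πl/n). Let φ : (0, ∞) → ℂ be twice differentiable and define u : ℝ × (0, ∞) × ℤ/nℤ → ℂ by u(t, r, j) = e^{−iωt} q^{lj} φ(r). Then u satisfies the Klein–Gordon equation Δu = m²u for the discrete black hole Laplacian Δ = −(r/r_H)∂_t² + (r_H/r)∂_r² + (r_H/r²)∂_r + (2/r²)(∂_+ + ∂_−), where (∂_± f)(j) = f(j±1) − f(j) acts on the ℤ/nℤ variable, if and only if φ satisfies φ''(r) + (1/r)φ'(r) + (ω² r²/r_H² + 2λ_l/(r_H r) − m² r/r_H)·φ(r) = 0 for all r > 0. -/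
/-- For the discrete black hole Laplacian
`Δ = -(r/r_H)∂_t² + (r_H/r)∂_r² + (r_H/r²)∂_r + (2/r²)(∂_+ + ∂_-)`,
the function `u(t,r,j) = e^{-iωt} q^{lj} φ(r)` satisfies the Klein–Gordon equation
`Δu = m²u` iff `φ'' + (1/r)φ' + (ω²r²/r_H² + 2λ_l/(r_H r) - m²r/r_H)φ = 0`
for all `r > 0`, where `q = exp(2πi/n)` and `λ_l = -4 sin²(πl/n)`. -/
theorem stmt12 (n : ℕ) (hn : 1 ≤ n) (q : ℂ)
    (hq : q = Complex.exp (2 * Real.pi * Complex.I / n))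
    (r_H : ℝ) (hrH : 0 < r_H) (ω m : ℝ) (l : ℤ)
    (lam : ℝ) (hlam : lam = -4 * Real.sin (Real.pi * l / n) ^ 2)
    (φ : ℝ → ℂ)
    (hφ1 : ∀ r : ℝ, 0 < r → DifferentiableAt ℝ φ r)
    (hφ2 : ∀ r : ℝ, 0 < r → DifferentiableAt ℝ (deriv φ) r)
    (u : ℝ → ℝ → ZMod n → ℂ)
    (hu : ∀ (t r : ℝ) (j : ZMod n),
      u t r j = Complex.exp (-Complex.I * ω * t) * q ^ (l * (j.val : ℤ)) * φ r) :
    (∀ (t r : ℝ), 0 < r → ∀ j : ZMod n,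
        -((r : ℂ) / (r_H : ℂ)) * deriv (deriv fun t' => u t' r j) t
          + ((r_H : ℂ) / (r : ℂ)) * deriv (deriv fun r' => u t r' j) r
          + ((r_H : ℂ) / (r : ℂ) ^ 2) * deriv (fun r' => u t r' j) r
          + (2 / (r : ℂ) ^ 2) * ((u t r (j + 1) - u t r j) + (u t r (j - 1) - u t r j))
          = (m : ℂ) ^ 2 * u t r j)
      ↔ (∀ r : ℝ, 0 < r →
        deriv (deriv φ) r + (1 / (r : ℂ)) * deriv φ r
          + ((ω ^ 2 * r ^ 2 / r_H ^ 2 + 2 * lam / (r_H * r) - m ^ 2 * r / r_H : ℝ) : ℂ) * φ r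
          = 0) := by
  haveI : NeZero n := ⟨by omega⟩
  have hq0 : q ≠ 0 := by rw [hq]; exact Complex.exp_ne_zero _
  have hnC : (n : ℂ) ≠ 0 := Nat.cast_ne_zero.2 (by omega)
  have hqn : q ^ (n : ℤ) = 1 := by
    rw [hq, zpow_natCast, ← Complex.exp_nat_mul]
    rw [show (n : ℂ) * (2 * Real.pi * Complex.I / n) = 2 * Real.pi * Complex.I by field_simp]
    exact Complex.exp_two_pi_mul_I
  have hqd : ∀ k : ℤ, (n : ℤ) ∣ k → q ^ k = 1 := by
    rintro k ⟨c, rfl⟩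
    rw [zpow_mul, hqn, one_zpow]
  -- Q shift lemma
  set Q : ZMod n → ℂ := fun j => q ^ (l * (j.val : ℤ)) with hQdef
  have hshift : ∀ (a b : ZMod n) (s : ℤ), b = a + (s : ZMod n) →
      Q b = Q a * q ^ (l * s) := by
    intro a b s hb
    have hdvd : (n : ℤ) ∣ ((b.val : ℤ) - ((a.val : ℤ) + s)) := by
      have : (((b.val : ℤ) - ((a.val : ℤ) + s) : ℤ) : ZMod n) = 0 := by
        push_cast
        simp [ZMod.natCast_val, ZMod.cast_id, hb]
      exact (ZMod.intCast_zmod_eq_zero_iff_dvd _ n).1 this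
    have hdvd2 : (n : ℤ) ∣ (l * (b.val : ℤ) - (l * (a.val : ℤ) + l * s)) := by
      have : l * (b.val : ℤ) - (l * (a.val : ℤ) + l * s)
          = l * ((b.val : ℤ) - ((a.val : ℤ) + s)) := by ring
      rw [this]; exact hdvd.mul_left l
    have : Q b = q ^ (l * (a.val : ℤ) + l * s) *
        q ^ (l * (b.val : ℤ) - (l * (a.val : ℤ) + l * s)) := by
      rw [hQdef, ← zpow_add₀ hq0]; ring_nf
    rw [this, hqd _ hdvd2, mul_one, zpow_add₀ hq0]
  -- lam identity
  have hlamq : q ^ l + q ^ (-l) - 2 = (lam : ℂ) := by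
    set θ : ℝ := 2 * Real.pi * l / n with hθ
    have hql : q ^ l = Complex.exp ((θ : ℂ) * Complex.I) := by
      rw [hq, ← Complex.exp_int_mul]
      congr 1
      rw [hθ]
      push_cast
      field_simp
    have hqnl : q ^ (-l) = Complex.exp (-(θ : ℂ) * Complex.I) := by
      rw [zpow_neg, hql, ← Complex.exp_neg, neg_mul]
    have hcos : q ^ l + q ^ (-l) = 2 * Real.cos θ := by
      rw [hql, hqnl, Complex.exp_mul_I, Complex.exp_mul_I, Complex.cos_neg,
        Complex.sin_neg]
      push_cast [Complex.ofReal_cos]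
      ring_nf
    rw [hcos]
    have hx : θ = 2 * (Real.pi * l / n) := by rw [hθ]; ring
    have : lam = 2 * Real.cos θ - 2 := by
      rw [hlam, hx, Real.cos_two_mul]
      have := Real.sin_sq_add_cos_sq (Real.pi * l / n)
      nlinarith
    rw [this]
    push_cast
    ring
  -- time-derivative
  set c : ℂ := -Complex.I * ω with hc
  set Et : ℝ → ℂ := fun t => Complex.exp (c * t) with hEtdef
  have hEt : ∀ t : ℝ, HasDerivAt Et (c * Et t) t := by
    intro t
    have h0 : HasDerivAt (fun z : ℂ => Complex.exp (c * z))
        (c * Complex.exp (c * t)) (t : ℂ) := by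
      have h1 : HasDerivAt (fun z : ℂ => c * z) c (t : ℂ) := by
        simpa using (hasDerivAt_id (t : ℂ)).const_mul c
      have h2 := (Complex.hasDerivAt_exp (c * t)).comp (t : ℂ) h1
      simpa [Function.comp_def, mul_comm] using h2
    exact h0.comp_ofReal
  have huE : ∀ (t r : ℝ) (j : ZMod n), u t r j = Et t * Q j * φ r := by
    intro t r j; rw [hu]
  -- key identity
  have key : ∀ (t r : ℝ), 0 < r → ∀ j : ZMod n,
      (-((r : ℂ) / (r_H : ℂ)) * deriv (deriv fun t' => u t' r j) t
        + ((r_H : ℂ) / (r : ℂ)) * deriv (deriv fun r' => u t r' j) r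
        + ((r_H : ℂ) / (r : ℂ) ^ 2) * deriv (fun r' => u t r' j) r
        + (2 / (r : ℂ) ^ 2) * ((u t r (j + 1) - u t r j) + (u t r (j - 1) - u t r j)))
        - (m : ℂ) ^ 2 * u t r j
      = Et t * Q j * ((r_H : ℂ) / (r : ℂ)) *
          (deriv (deriv φ) r + (1 / (r : ℂ)) * deriv φ r
            + ((ω ^ 2 * r ^ 2 / r_H ^ 2 + 2 * lam / (r_H * r) - m ^ 2 * r / r_H : ℝ) : ℂ)
              * φ r) := by
    intro t r hr j
    have hrC : (r : ℂ) ≠ 0 := Complex.ofReal_ne_zero.2 hr.ne'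
    have hrHC : (r_H : ℂ) ≠ 0 := Complex.ofReal_ne_zero.2 hrH.ne'
    -- time part
    have eT : (fun t' => u t' r j) = fun t' => Et t' * (Q j * φ r) := by
      funext t'; rw [huE]; ring
    have eT1 : deriv (fun t' => Et t' * (Q j * φ r))
        = fun s => c * Et s * (Q j * φ r) := by
      funext s
      simpa [mul_assoc] using ((hEt s).mul_const (Q j * φ r)).deriv
    have eT2 : deriv (deriv fun t' => u t' r j) t = c * (c * Et t) * (Q j * φ r) := by
      rw [eT, eT1]
      exact (((hEt t).const_mul c).mul_const (Q j * φ r)).deriv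
    have hc2 : c * c = -(ω : ℂ) ^ 2 := by
      rw [hc]
      calc -Complex.I * ω * (-Complex.I * ω) = Complex.I ^ 2 * ω ^ 2 := by ring
        _ = -(ω : ℂ) ^ 2 := by rw [Complex.I_sq]; ring
    have hT : deriv (deriv fun t' => u t' r j) t = -(ω : ℂ) ^ 2 * (Et t * Q j * φ r) := by
      rw [eT2, show c * (c * Et t) * (Q j * φ r) = (c * c) * (Et t * Q j * φ r) by ring,
        hc2]
    -- radial part
    have eR : (fun r' => u t r' j) = fun r' => (Et t * Q j) * φ r' := by
      funext r'; rw [huE]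
    have hR1 : deriv (fun r' => u t r' j) = fun r' => (Et t * Q j) * deriv φ r' := by
      rw [eR]; exact deriv_const_mul_field' _
    have hR2 : deriv (deriv fun r' => u t r' j) r
        = (Et t * Q j) * deriv (deriv φ) r := by
      rw [hR1]; exact deriv_const_mul_field _
    -- angular part
    have hA : (u t r (j + 1) - u t r j) + (u t r (j - 1) - u t r j)
        = (lam : ℂ) * (Et t * Q j * φ r) := by
      rw [huE, huE, huE]
      rw [hshift j (j + 1) 1 (by push_cast; ring), hshift j (j - 1) (-1) (by push_cast; ring)]
      rw [mul_one, show l * (-1 : ℤ) = -l by ring, ← hlamq]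
      ring
    rw [hT, hR2, hR1, hA, huE]
    have hcoef : ((ω ^ 2 * r ^ 2 / r_H ^ 2 + 2 * lam / (r_H * r) - m ^ 2 * r / r_H : ℝ) : ℂ)
        = ((ω : ℂ) ^ 2 * r ^ 2 * r + 2 * lam * r_H - m ^ 2 * r ^ 2 * r_H)
          / ((r_H : ℂ) ^ 2 * r) := by
      push_cast
      field_simp
    rw [hcoef]
    field_simp [hrC, hrHC]
    ring
  have hfac : ∀ (t : ℝ) (r : ℝ), 0 < r → ∀ j : ZMod n,
      Et t * Q j * ((r_H : ℂ) / (r : ℂ)) ≠ 0 := by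
    intro t r hr j
    exact mul_ne_zero (mul_ne_zero (Complex.exp_ne_zero _) (zpow_ne_zero _ hq0))
      (div_ne_zero (Complex.ofReal_ne_zero.2 hrH.ne') (Complex.ofReal_ne_zero.2 hr.ne'))
  constructor
  · intro h r hr
    have h0 := h 0 r hr 0
    have hk := key 0 r hr 0
    rw [sub_eq_zero.2 h0] at hk
    exact (mul_eq_zero.1 hk.symm).resolve_left (hfac 0 r hr 0)
  · intro h t r hr j
    have hk := key t r hr j
    rw [h r hr, mul_zero] at hk
    exact sub_eq_zero.1 hk
end
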